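/- arXiv:0907.5121 — 3 statements merged into one kernel-verified Lean document; each statement's English description precedes it below -/
import Mathlib

section
/- If S ⊆ N^n is linear, then the set S^⊕ = { s_1 + ... + s_k | k ≥ 1, each s_i in S } of all nonempty finite sums of elements of S is semilinear. -/
def IsLinear {n : ℕ} (S : Set (Fin n → ℕ)) : Prop :=
  ∃ (t : ℕ) (v₀ : Fin n → ℕ) (v : Fin t → Fin n → ℕ),
    S = {x | ∃ i : Fin t → ℕ, x = v₀ + ∑ j, i j • v j}

def IsSemilinear {n : ℕ} (S : Set (Fin n → ℕ)) : Prop :=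
  ∃ (k : ℕ) (L : Fin k → Set (Fin n → ℕ)),
    (∀ i, IsLinear (L i)) ∧ S = ⋃ i, L i

theorem linear_sums_semilinear {n : ℕ} (S : Set (Fin n → ℕ)) (hS : IsLinear S) :
    IsSemilinear {x | ∃ k : ℕ, 1 ≤ k ∧ ∃ s : Fin k → Fin n → ℕ,
      (∀ i, s i ∈ S) ∧ x = ∑ i, s i} := by
  obtain ⟨t, v₀, v, rfl⟩ := hS
  set w : Fin (t + 1) → Fin n → ℕ := Fin.cons v₀ v with hw
  refine ⟨1, fun _ => {x | ∃ i : Fin (t+1) → ℕ, x = v₀ + ∑ j, i j • w j},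
    fun _ => ⟨t+1, v₀, w, rfl⟩, ?_⟩
  ext x
  simp only [Set.mem_iUnion, Set.mem_setOf_eq, Fin.exists_fin_one]
  constructor
  · rintro ⟨k, hk, s, hs, rfl⟩
    choose c hc using hs
    refine ⟨Fin.cons (k - 1) (fun j => ∑ i, c i j), ?_⟩
    have h1 : ∑ i, s i = k • v₀ + ∑ j, (∑ i, c i j) • v j := by
      calc ∑ i, s i = ∑ i, (v₀ + ∑ j, c i j • v j) := by
            exact Finset.sum_congr rfl (fun i _ => hc i)
        _ = (∑ _i : Fin k, v₀) + ∑ i, ∑ j, c i j • v j := Finset.sum_add_distrib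
        _ = k • v₀ + ∑ j, ∑ i, c i j • v j := by
            rw [Finset.sum_const, Finset.card_univ, Fintype.card_fin, Finset.sum_comm]
        _ = k • v₀ + ∑ j, (∑ i, c i j) • v j := by
            congr 1; exact Finset.sum_congr rfl fun j _ => (Finset.sum_smul).symm
    rw [h1, Fin.sum_univ_succ]
    simp only [Fin.cons_zero, Fin.cons_succ, hw]
    have : k • v₀ = v₀ + (k - 1) • v₀ := by
      rw [← succ_nsmul', Nat.sub_add_cancel hk]
    rw [this]; abel
  · rintro ⟨i, rfl⟩
    refine ⟨i 0 + 1, Nat.le_add_left 1 _,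
      Fin.cons (v₀ + ∑ j, i j.succ • v j) (fun _ => v₀), ?_, ?_⟩
    · intro m
      refine m.cases ⟨fun j => i j.succ, rfl⟩ (fun m => ⟨0, by simp⟩)
    · rw [Fin.sum_univ_succ, Fin.sum_univ_succ]
      simp only [Fin.cons_zero, Fin.cons_succ, Finset.sum_const, Finset.card_univ,
        Fintype.card_fin, hw]
      abel
end

section
/- If L is a language over Σ with a semilinear Parikh map, then the positive closure L^+ = { w_1 w_2 ... w_k | k ≥ 1, each w_i in L } has a semilinear Parikh map. -/
def parikh {n : ℕ} (w : List (Fin n)) : Fin n → ℕ := fun a => w.count a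

def wpow {α : Type} (β : List α) (m : ℕ) : List α := (List.replicate m β).flatten

open Set Pointwise Computability

theorem vadd_closure_range_eq {M ι : Type*} [AddCommMonoid M] [Fintype ι] (a : M) (v : ι → M) :
    a +ᵥ (AddSubmonoid.closure (range v) : Set M) = {x | ∃ i : ι → ℕ, x = a + ∑ j, i j • v j} := by
  ext x
  simp [mem_vadd_set, AddSubmonoid.mem_closure_range_iff_of_fintype, eq_comm]

theorem isLinear_iff_isLinearSet {n : ℕ} {S : Set (Fin n → ℕ)} : IsLinear S ↔ IsLinearSet S := by
  constructor
  · rintro ⟨t, v₀, v, rfl⟩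
    exact ⟨v₀, range v, finite_range v, (vadd_closure_range_eq v₀ v).symm⟩
  · intro h
    obtain ⟨v₀, T, rfl⟩ := isLinearSet_iff.mp h
    refine ⟨T.card, v₀, fun j => T.equivFin.symm j, ?_⟩
    rw [← vadd_closure_range_eq]
    congr
    exact ((T.equivFin.symm.surjective.range_comp Subtype.val).trans Subtype.range_coe).symm

theorem isSemilinear_iff_isSemilinearSet {n : ℕ} {S : Set (Fin n → ℕ)} :
    IsSemilinear S ↔ IsSemilinearSet S := by
  constructor
  · rintro ⟨k, L, hL, rfl⟩
    exact .iUnion fun i => (isLinear_iff_isLinearSet.mp (hL i)).isSemilinearSet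
  · intro h
    obtain ⟨F, hF, rfl⟩ := isSemilinearSet_iff.mp h
    refine ⟨F.card, fun i => F.equivFin.symm i,
      fun i => isLinear_iff_isLinearSet.mpr (hF _ (F.equivFin.symm i).2), ?_⟩
    rw [sUnion_eq_iUnion]
    exact (F.equivFin.symm.surjective.iUnion_comp _).symm

theorem parikh_append {n : ℕ} (u v : List (Fin n)) : parikh (u ++ v) = parikh u + parikh v := by
  funext a
  simp [parikh]

theorem parikh_flatten {n : ℕ} (L : List (List (Fin n))) :
    parikh L.flatten = (L.map parikh).sum := by
  induction L with
  | nil => rfl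
  | cons u L ih => simp [parikh_append, ih]

theorem image_parikh_mul {n : ℕ} (l m : Language (Fin n)) :
    parikh '' (l * m) = parikh '' l + parikh '' m :=
  image_image2_distrib parikh_append

theorem image_parikh_kstar {n : ℕ} (l : Language (Fin n)) :
    parikh '' (l∗ : Language (Fin n)) = AddSubmonoid.closure (parikh '' l) := by
  apply Subset.antisymm
  · rintro _ ⟨_, ⟨Ls, rfl, hLs⟩, rfl⟩
    rw [parikh_flatten]
    refine list_sum_mem fun x hx => ?_
    obtain ⟨w, hw, rfl⟩ := List.mem_map.mp hx
    exact AddSubmonoid.subset_closure (mem_image_of_mem parikh (hLs w hw))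
  · intro x hx
    induction hx using AddSubmonoid.closure_induction with
    | mem x hx =>
      obtain ⟨w, hw, rfl⟩ := hx
      exact ⟨w, le_kstar (a := l) hw, rfl⟩
    | zero => exact ⟨[], Language.nil_mem_kstar l, rfl⟩
    | add x y _ _ hx hy =>
      obtain ⟨u, hu, rfl⟩ := hx
      obtain ⟨v, hv, rfl⟩ := hy
      refine ⟨u ++ v, ?_, parikh_append u v⟩
      rw [← kstar_mul_kstar l]
      exact Language.append_mem_mul hu hv

theorem Language.mul_kstar_eq_setOf_flatten_ofFn {α : Type*} (l : Language α) :
    l * l∗ = {w | ∃ k : ℕ, 1 ≤ k ∧ ∃ ws : Fin k → List α, (∀ i, ws i ∈ l) ∧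
      w = (List.ofFn ws).flatten} := by
  ext w
  constructor
  · rintro ⟨u, hu, _, ⟨Ls, rfl, hLs⟩, rfl⟩
    refine ⟨Ls.length + 1, by omega, Fin.cons u Ls.get,
      Fin.cases hu fun i => hLs _ (List.get_mem Ls i), ?_⟩
    simp [List.ofFn_succ]
  · rintro ⟨k, hk, ws, hws, rfl⟩
    obtain ⟨m, rfl⟩ := Nat.exists_eq_add_of_le' hk
    rw [List.ofFn_succ, List.flatten_cons]
    refine Language.append_mem_mul (hws 0) (Language.join_mem_kstar ?_)
    simp [List.mem_ofFn, hws]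

theorem parikh_plus_semilinear {n : ℕ} (L : Set (List (Fin n)))
    (hL : IsSemilinear (parikh '' L)) :
    IsSemilinear (parikh '' {w | ∃ k : ℕ, 1 ≤ k ∧ ∃ ws : Fin k → List (Fin n),
      (∀ i, ws i ∈ L) ∧ w = (List.ofFn ws).flatten}) := by
  rw [isSemilinear_iff_isSemilinearSet] at hL ⊢
  let l : Language (Fin n) := L
  have h : IsSemilinearSet (parikh '' (l * l∗)) := by
    rw [image_parikh_mul, image_parikh_kstar]
    exact hL.add hL.closure
  rwa [Language.mul_kstar_eq_setOf_flatten_ofFn] at h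
end

section
/- If S is a semilinear subset of N^n, then for any coordinate i and any constant c, the set { v in S | v_i = c } (the intersection of S with { v in N^n | v_i = c }) is semilinear. -/
lemma semilinear_empty {n : ℕ} : IsSemilinear (∅ : Set (Fin n → ℕ)) :=
  ⟨0, Fin.elim0, fun i => i.elim0, by simp⟩

lemma IsLinear.isSemilinear {n : ℕ} {S : Set (Fin n → ℕ)} (h : IsLinear S) :
    IsSemilinear S :=
  ⟨1, fun _ => S, fun _ => h, (Set.iUnion_const S).symm⟩

lemma semilinear_union {n : ℕ} {S T : Set (Fin n → ℕ)}
    (hS : IsSemilinear S) (hT : IsSemilinear T) : IsSemilinear (S ∪ T) := by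
  obtain ⟨k, L, hL, rfl⟩ := hS
  obtain ⟨m, M, hM, rfl⟩ := hT
  refine ⟨k + m, fun j => if h : (j : ℕ) < k then L ⟨j, h⟩ else
    M ⟨(j : ℕ) - k, by omega⟩, ?_, ?_⟩
  · intro j
    by_cases h : (j : ℕ) < k <;> simp only [h, dite_true, dite_false]
    · exact hL _
    · exact hM _
  · ext x
    simp only [Set.mem_iUnion, Set.mem_union]
    constructor
    · rintro (⟨j, hj⟩ | ⟨j, hj⟩)
      · refine ⟨⟨(j : ℕ), by omega⟩, ?_⟩
        simpa [j.isLt] using hj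
      · refine ⟨⟨k + (j : ℕ), by omega⟩, ?_⟩
        have h : ¬ (k + (j : ℕ) < k) := by omega
        simpa [h] using hj
    · rintro ⟨j, hj⟩
      by_cases h : (j : ℕ) < k
      · rw [dif_pos h] at hj; exact Or.inl ⟨_, hj⟩
      · rw [dif_neg h] at hj; exact Or.inr ⟨_, hj⟩

lemma semilinear_biUnion {n : ℕ} {α : Type*} [DecidableEq α] (A : Finset α)
    (f : α → Set (Fin n → ℕ)) (hf : ∀ a ∈ A, IsSemilinear (f a)) :
    IsSemilinear (⋃ a ∈ A, f a) := by
  induction A using Finset.induction with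
  | empty => simpa using semilinear_empty
  | @insert a s ha ih =>
    rw [Finset.set_biUnion_insert]
    exact semilinear_union (hf a (Finset.mem_insert_self a s))
      (ih fun b hb => hf b (Finset.mem_insert_of_mem hb))

lemma linear_fix {n t : ℕ} (v₀ : Fin n → ℕ) (v : Fin t → Fin n → ℕ) (i : Fin n) (c : ℕ) :
    IsSemilinear {x ∈ {x | ∃ a : Fin t → ℕ, x = v₀ + ∑ j, a j • v j} | x i = c} := by
  classical
  set w : Fin t → Fin n → ℕ := fun j => if v j i = 0 then v j else 0 with hw
  set A : Set (Fin t → ℕ) :=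
    {a | v₀ i + ∑ j, a j * v j i = c ∧ ∀ j, v j i = 0 → a j = 0} with hA
  have hAfin : A.Finite := by
    apply Set.Finite.subset (Set.Finite.pi (fun j : Fin t => Set.finite_Iic c))
    rintro a ⟨h1, h2⟩ j _
    simp only [Set.mem_Iic]
    by_cases hv : v j i = 0
    · simp [h2 j hv]
    · calc a j ≤ a j * v j i := Nat.le_mul_of_pos_right _ (Nat.pos_of_ne_zero hv)
        _ ≤ ∑ j, a j * v j i :=
            Finset.single_le_sum (f := fun j => a j * v j i) (fun _ _ => Nat.zero_le _) (Finset.mem_univ j)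
        _ ≤ c := by omega
  have key : {x ∈ {x | ∃ a : Fin t → ℕ, x = v₀ + ∑ j, a j • v j} | x i = c}
      = ⋃ a ∈ hAfin.toFinset, {x | ∃ b : Fin t → ℕ,
          x = (v₀ + ∑ j, a j • v j) + ∑ j, b j • w j} := by
    ext x
    simp only [Set.mem_setOf_eq, Set.mem_iUnion, Set.Finite.mem_toFinset, hA,
      Set.mem_sep_iff, exists_prop]
    constructor
    · rintro ⟨⟨a, rfl⟩, hc⟩
      have hc' : v₀ i + ∑ j, a j * v j i = c := by
        simpa [Finset.sum_apply, smul_eq_mul] using hc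
      refine ⟨fun j => if v j i = 0 then 0 else a j, ⟨?_, fun j hj => by simp [hj]⟩,
        fun j => if v j i = 0 then a j else 0, ?_⟩
      · rw [← hc']
        congr 1
        apply Finset.sum_congr rfl
        intro j _
        by_cases hv : v j i = 0 <;> simp [hv]
      · rw [add_assoc, ← Finset.sum_add_distrib]
        congr 1
        apply Finset.sum_congr rfl
        intro j _
        by_cases hv : v j i = 0 <;> simp [hw, hv]
    · rintro ⟨a, ⟨h1, h2⟩, b, rfl⟩
      constructor
      · refine ⟨fun j => a j + (if v j i = 0 then b j else 0), ?_⟩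
        rw [add_assoc, ← Finset.sum_add_distrib]
        congr 1
        apply Finset.sum_congr rfl
        intro j _
        by_cases hv : v j i = 0 <;> simp [hw, hv, add_smul]
      · have hwz : ∀ j, w j i = 0 := by
          intro j
          by_cases hv : v j i = 0 <;> simp [hw, hv]
        simp [Finset.sum_apply, smul_eq_mul, hwz, h1]
  rw [key]
  apply semilinear_biUnion
  intro a _
  exact IsLinear.isSemilinear ⟨t, v₀ + ∑ j, a j • v j, w, rfl⟩

theorem semilinear_fix_coordinate {n : ℕ} (S T : Set (Fin n → ℕ))
    (hS : IsSemilinear S) (hT : IsSemilinear T) (i : Fin n) (c : ℕ) :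
    IsSemilinear {v ∈ S | v i = c} := by
  obtain ⟨k, L, hL, rfl⟩ := hS
  have key : {v ∈ ⋃ j, L j | v i = c}
      = ⋃ j ∈ (Finset.univ : Finset (Fin k)), {v ∈ L j | v i = c} := by
    ext x
    simp only [Set.mem_sep_iff, Set.mem_iUnion, Set.mem_setOf_eq, Finset.mem_univ,
      exists_prop, true_and]
    tauto
  rw [key]
  apply semilinear_biUnion
  intro j _
  obtain ⟨t, v₀, v, hv⟩ := hL j
  rw [hv]
  exact linear_fix v₀ v i c
end
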